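/- arXiv:1701.00821 — 2 statements merged into one kernel-verified Lean document; each statement's English description precedes it below -/
import Mathlib

section
/- Let Δ ≥ 3 and λ > 0, and define γ = (λ/(1+λ)) · Σ_{i=1}^{Δ−1} (1 − λ/(1+λ)^Δ)^{i−1}. If λ < 1.13/(Δ − 2), then γ < 1. -/
/-!
With `v = λ/(1+λ)`, `m = Δ - 1` and `w = (1-v)^m` one has `λ/(1+λ)^Δ = v w`, so
`γ = v ∑_{i<m} (1 - v w)^i`. Truncating the binomial expansion of `(1 - x)^i` after the
quadratic term bounds `γ` above by a polynomial in `s = m v`, `v` and `w`; truncating that of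
`w = (1-v)^m` after the cubic term, together with `w (1 + s) ≤ 1`, pins `w` down well enough
to show this polynomial is `< 1`. In these variables the hypothesis `(m - 1) λ < 1.13`
reads `s + 0.13 v < 1.13`.
-/

open Finset

lemma one_sub_pow_le_quadratic {x : ℝ} (hx0 : 0 ≤ x) (hx1 : x ≤ 1) (n : ℕ) :
    (1 - x) ^ n ≤ 1 - n * x + n * (n - 1) / 2 * x ^ 2 := by
  induction n with
  | zero => norm_num
  | succ n ih =>
    have hn : (0 : ℝ) ≤ n * (n - 1) := by
      rcases n with _ | n
      · simp
      · push_cast; nlinarith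
    calc (1 - x) ^ (n + 1) = (1 - x) * (1 - x) ^ n := pow_succ' _ _
      _ ≤ (1 - x) * (1 - n * x + n * (n - 1) / 2 * x ^ 2) :=
          mul_le_mul_of_nonneg_left ih (by linarith)
      _ ≤ _ := by push_cast; nlinarith [mul_nonneg hn (pow_nonneg hx0 3)]

lemma cubic_le_one_sub_pow {x : ℝ} (hx0 : 0 ≤ x) (hx1 : x ≤ 1) (n : ℕ) :
    1 - n * x + n * (n - 1) / 2 * x ^ 2 - n * (n - 1) * (n - 2) / 6 * x ^ 3 ≤ (1 - x) ^ n := by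
  induction n with
  | zero => norm_num
  | succ n ih =>
    have hn : (0 : ℝ) ≤ n * (n - 1) * (n - 2) := by
      rcases n with _ | _ | n
      · simp
      · simp
      · push_cast; ring_nf; positivity
    calc _ ≤ (1 - x) * (1 - n * x + n * (n - 1) / 2 * x ^ 2 - n * (n - 1) * (n - 2) / 6 * x ^ 3) := by
          push_cast; nlinarith [mul_nonneg hn (pow_nonneg hx0 4)]
      _ ≤ (1 - x) * (1 - x) ^ n := mul_le_mul_of_nonneg_left ih (by linarith)
      _ = (1 - x) ^ (n + 1) := (pow_succ' _ _).symm

lemma sum_range_one_sub_pow_le {x : ℝ} (hx0 : 0 ≤ x) (hx1 : x ≤ 1) (m : ℕ) :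
    ∑ i ∈ range m, (1 - x) ^ i ≤ m - m * (m - 1) / 2 * x + m * (m - 1) * (m - 2) / 6 * x ^ 2 := by
  refine (sum_le_sum fun i _ ↦ one_sub_pow_le_quadratic hx0 hx1 i).trans_eq ?_
  induction m with
  | zero => simp
  | succ m ih => rw [sum_range_succ, ih]; push_cast; ring

lemma one_sub_pow_mul_one_add_mul_le {v : ℝ} (hv0 : -1 ≤ v) (hv1 : v ≤ 1) (n : ℕ) :
    (1 - v) ^ n * (1 + n * v) ≤ 1 :=
  calc (1 - v) ^ n * (1 + n * v) ≤ (1 - v) ^ n * (1 + v) ^ n :=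
        mul_le_mul_of_nonneg_left (one_add_mul_le_pow (by linarith) n) (pow_nonneg (by linarith) n)
    _ = (1 - v ^ 2) ^ n := by rw [← mul_pow]; ring
    _ ≤ 1 := pow_le_one₀ (by nlinarith) (by nlinarith)

-- Nearly tight at `s = 2v ≈ 1.06`, i.e. `Δ = 3` and `λ` close to `1.13`.
lemma sub_one_lt_cubic_mul {s v : ℝ} (hv : 0 < v) (h2v : 2 * v ≤ s) (hs1 : 1 ≤ s)
    (hsv : s + 13 / 100 * v < 113 / 100) :
    s - 1 < (1 - s + s * (s - v) / 2 - s * (s - v) * (s - 2 * v) / 6) *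
      (s * (s - v) / 2 - s * (s - v) * (s - 2 * v) / 12) := by
  have he : 0 ≤ 113 / 100 - s - 13 / 100 * v := by linarith
  have ht : 0 ≤ s - 1 := by linarith
  have hu : 0 ≤ s - 2 * v := by linarith
  nlinarith [mul_nonneg he ht, mul_nonneg he hu, mul_nonneg ht hu,
    mul_nonneg (mul_nonneg he ht) hu, mul_nonneg he hv.le, mul_nonneg ht hv.le,
    mul_nonneg hu hv.le, mul_nonneg (mul_nonneg ht ht) hu,
    mul_nonneg (mul_nonneg he he) hu, mul_nonneg (mul_nonneg he he) he]

lemma drift_bound_lt_one {s v w : ℝ} (hv : 0 < v) (h2v : 2 * v ≤ s)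
    (hsv : s + 13 / 100 * v < 113 / 100) (hw0 : 0 < w) (hw_up : w * (1 + s) ≤ 1)
    (hw_low : 1 - s + s * (s - v) / 2 - s * (s - v) * (s - 2 * v) / 6 ≤ w) :
    s - s * (s - v) / 2 * w + s * (s - v) * (s - 2 * v) / 6 * w ^ 2 < 1 := by
  set A := s * (s - v) / 2 with hA
  set B := s * (s - v) * (s - 2 * v) / 6 with hB
  have hs0 : 0 ≤ s := by linarith
  have hsv0 : 0 ≤ s - v := by linarith
  have hs2v0 : 0 ≤ s - 2 * v := by linarith
  have hA0 : 0 ≤ A := by positivity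
  have hB0 : 0 ≤ B := by positivity
  have hBA : B ≤ A := by
    have : B = A * (s - 2 * v) / 3 := by rw [hA, hB]; ring
    nlinarith
  have hw1 : w ≤ 1 := by nlinarith
  have hABw : 0 ≤ A - B * w := by nlinarith
  suffices s - 1 < w * (A - B * w) by linarith
  rcases lt_or_ge s 1 with hs1 | hs1
  · nlinarith [mul_nonneg hw0.le hABw]
  · have key : s - 1 < (1 - s + A - B) * (A - B / 2) := by
      linear_combination sub_one_lt_cubic_mul hv h2v hs1 hsv
    have hw2 : w ≤ 1 / 2 := by nlinarith
    have hL : 0 < 1 - s + A - B := pos_of_mul_pos_left (b := A - B / 2) (by linarith) (by linarith)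
    calc s - 1 < (1 - s + A - B) * (A - B / 2) := key
      _ ≤ (1 - s + A - B) * (A - B * w) := by gcongr; nlinarith
      _ ≤ w * (A - B * w) := mul_le_mul_of_nonneg_right hw_low hABw

/-- If `λ < 1.13/(Δ-2)` (with `Δ ≥ 3`, `λ > 0`), then the PRAR drift parameter
`γ = (λ/(1+λ)) · Σ_{i=1}^{Δ-1} (1 - λ/(1+λ)^Δ)^{i-1}` is less than 1. -/
theorem stmt_4 (Δ : ℕ) (hΔ : 3 ≤ Δ) (lam : ℝ) (hlam : 0 < lam)
    (hrange : lam < 1.13 / ((Δ : ℝ) - 2)) :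
    (lam / (1 + lam)) *
      ∑ i ∈ Finset.range (Δ - 1), (1 - lam / (1 + lam) ^ Δ) ^ i < 1 := by
  obtain ⟨m, rfl⟩ : ∃ m, Δ = m + 1 := ⟨Δ - 1, by omega⟩
  have hm : (2 : ℝ) ≤ m := by exact_mod_cast (by omega : 2 ≤ m)
  have hl1 : 0 < 1 + lam := by linarith
  set v := lam / (1 + lam) with hv
  have hv0 : 0 < v := div_pos hlam hl1
  have hv1 : v < 1 := (div_lt_one hl1).2 (by linarith)
  have hx : lam / (1 + lam) ^ (m + 1) = v * (1 - v) ^ m := by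
    rw [hv, one_sub_div hl1.ne', add_sub_cancel_right, div_pow, one_pow, pow_succ]
    field_simp
  have hsv : m * v + 13 / 100 * v < 113 / 100 := by
    push_cast at hrange
    rw [lt_div_iff₀ (by linarith)] at hrange
    rw [hv, ← add_mul, ← mul_div_assoc, div_lt_iff₀ hl1]
    linarith
  set w := (1 - v) ^ m
  have hw0 : 0 < w := pow_pos (by linarith) m
  have hvw : v * w ≤ 1 := mul_le_one₀ hv1.le hw0.le (pow_le_one₀ (by linarith) (by linarith))
  rw [Nat.add_sub_cancel, hx]
  calc v * ∑ i ∈ range m, (1 - v * w) ^ i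
      ≤ v * (m - m * (m - 1) / 2 * (v * w) + m * (m - 1) * (m - 2) / 6 * (v * w) ^ 2) :=
        mul_le_mul_of_nonneg_left (sum_range_one_sub_pow_le (by positivity) hvw m) hv0.le
    _ = m * v - m * v * (m * v - v) / 2 * w + m * v * (m * v - v) * (m * v - 2 * v) / 6 * w ^ 2 := by
        ring
    _ < 1 := drift_bound_lt_one hv0 (by nlinarith) hsv hw0
        (one_sub_pow_mul_one_add_mul_le (by linarith) hv1.le m)
        ((by ring : _ = _).trans_le (cubic_le_one_sub_pow hv0.le hv1.le m))
end

section
/- Let Δ ≥ 3. The PRAR critical value for independent sets, λ_c(PRAR) defined by γ(λ_c) = 1 with γ(λ) = (λ/(1+λ))Σ_{i=1}^{Δ−1}(1 − λ/(1+λ)^Δ)^{i−1}, strictly exceeds the Clan of Ancestors threshold 1/(Δ−1); equivalently, γ(1/(Δ−1)) < 1. -/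
lemma prar_aux (Δ : ℕ) (hΔ : 3 ≤ Δ) (l : ℝ) (hl : 0 < l)
    (hle : l ≤ 1 / ((Δ : ℝ) - 1)) :
    (l / (1 + l)) * ∑ i ∈ Finset.range (Δ - 1), (1 - l / (1 + l) ^ Δ) ^ i < 1 := by
  have hD : (2 : ℝ) ≤ (Δ : ℝ) - 1 := by
    have : (3 : ℝ) ≤ (Δ : ℝ) := by exact_mod_cast hΔ
    linarith
  set D : ℝ := (Δ : ℝ) - 1 with hDdef
  have hDpos : 0 < D := by linarith
  have h1l : (0 : ℝ) < 1 + l := by linarith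
  have hpow : (0 : ℝ) < (1 + l) ^ Δ := pow_pos h1l Δ
  have hself : 1 + l ≤ (1 + l) ^ Δ := le_self_pow₀ (by linarith) (by omega)
  have hx0 : 0 ≤ 1 - l / (1 + l) ^ Δ := by
    have : l / (1 + l) ^ Δ ≤ 1 := by
      rw [div_le_one hpow]; linarith
    linarith
  have hx1 : 1 - l / (1 + l) ^ Δ ≤ 1 := by
    have : 0 < l / (1 + l) ^ Δ := div_pos hl hpow
    linarith
  set S : ℝ := ∑ i ∈ Finset.range (Δ - 1), (1 - l / (1 + l) ^ Δ) ^ i with hSdef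
  have hS0 : 0 ≤ S := Finset.sum_nonneg fun i _ => pow_nonneg hx0 i
  have hSD : S ≤ D := by
    have h1 : S ≤ (Finset.range (Δ - 1)).card • (1 : ℝ) :=
      Finset.sum_le_card_nsmul _ _ _ (fun i _ => pow_le_one₀ hx0 hx1)
    rw [Finset.card_range] at h1
    have h2 : ((Δ - 1 : ℕ) : ℝ) = D := by
      have : (1 : ℕ) ≤ Δ := by omega
      push_cast [Nat.cast_sub this]
      ring
    simpa [nsmul_eq_mul, h2] using h1
  have hlD : l * D ≤ 1 := by
    rw [← le_div_iff₀ hDpos] at *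
    exact hle
  rw [div_mul_eq_mul_div, div_lt_one h1l]
  have : l * S ≤ l * D := mul_le_mul_of_nonneg_left hSD hl.le
  linarith

/-- PRAR beats Clan of Ancestors for independent sets: for `Δ ≥ 3`, the drift
`γ(λ) = (λ/(1+λ)) Σ_{i=1}^{Δ-1} (1 - λ/(1+λ)^Δ)^{i-1}` satisfies `γ(1/(Δ-1)) < 1`,
and any critical value `λ_c > 0` with `γ(λ_c) = 1` exceeds `1/(Δ-1)`. -/
theorem stmt_19 (Δ : ℕ) (hΔ : 3 ≤ Δ) :
    (((1 / ((Δ : ℝ) - 1)) / (1 + 1 / ((Δ : ℝ) - 1))) *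
        ∑ i ∈ Finset.range (Δ - 1),
          (1 - (1 / ((Δ : ℝ) - 1)) / (1 + 1 / ((Δ : ℝ) - 1)) ^ Δ) ^ i < 1) ∧
      ∀ lc : ℝ, 0 < lc →
        (lc / (1 + lc)) * ∑ i ∈ Finset.range (Δ - 1), (1 - lc / (1 + lc) ^ Δ) ^ i = 1 →
        1 / ((Δ : ℝ) - 1) < lc := by
  have hD : (2 : ℝ) ≤ (Δ : ℝ) - 1 := by
    have : (3 : ℝ) ≤ (Δ : ℝ) := by exact_mod_cast hΔ
    linarith
  have hDpos : (0 : ℝ) < (Δ : ℝ) - 1 := by linarith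
  constructor
  · exact prar_aux Δ hΔ _ (by positivity) le_rfl
  · intro lc hlc heq
    by_contra h
    push_neg at h
    have := prar_aux Δ hΔ lc hlc h
    rw [heq] at this
    exact lt_irrefl 1 this
end
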